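/- arXiv:1703.05387 — 4 statements merged into one kernel-verified Lean document; each statement's English description precedes it below -/
import Mathlib

section
/- Let a < b be real numbers and let m ∈ L^∞(a,b). Define u(t) := ∫_a^b G(t,s)·m(s) ds, where G(t,s) := (min(t,s) − a)·(b − max(t,s))/(b − a) is the Green function of −d²/dt² with Dirichlet boundary conditions on (a,b) (so that u is the unique solution of −u'' = m on (a,b), u(a) = u(b) = 0). If max{ ∫_a^b (t−a)·m⁻(t) dt, ∫_a^b (b−t)·m⁻(t) dt } < ∫_a^b min(t−a, b−t)·m⁺(t) dt, then u > 0 on (a,b) and there exists c > 0 such that u(t) ≥ c·min(t−a, b−t) for all t ∈ [a,b]. -/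
/-!
Split `m = m⁺ - m⁻`. The kernel is squeezed between multiples of `δ(t)`: from below by
`δ(t) δ(s) / (b - a)`, used against `m⁺`; from above by `(t - a)(b - s) / (b - a)` and by
`(b - t)(s - a) / (b - a)`, used against `m⁻` (whichever matches `δ(t)`). Hence
`u(t) ≥ δ(t) (∫ δ m⁺ - max (∫ (s - a) m⁻) (∫ (b - s) m⁻)) / (b - a)`, and the hypothesis says
exactly that this constant is positive.
-/

open MeasureTheory Real Filter

noncomputable section

open Set

def dirichletGreen (a b t s : ℝ) : ℝ := (min t s - a) * (b - max t s) / (b - a)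

section Kernel

variable {a b t s : ℝ}

lemma dirichletGreen_comm : dirichletGreen a b t s = dirichletGreen a b s t := by
  simp only [dirichletGreen, min_comm, max_comm]

lemma dirichletGreen_of_le (h : t ≤ s) :
    dirichletGreen a b t s = (t - a) / (b - a) * (b - s) := by
  rw [dirichletGreen, min_eq_left h, max_eq_right h, div_mul_eq_mul_div]

lemma continuous_dirichletGreen : Continuous (dirichletGreen a b t) := by
  unfold dirichletGreen
  fun_prop

lemma dirichletGreen_le_div_mul (hab : a ≤ b) :
    dirichletGreen a b t s ≤ (t - a) / (b - a) * (b - s) := by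
  rcases le_total t s with h | h
  · exact (dirichletGreen_of_le h).le
  · rw [dirichletGreen_comm, dirichletGreen_of_le h, div_mul_eq_mul_div, div_mul_eq_mul_div]
    exact div_le_div_of_nonneg_right
      (by linarith [mul_nonneg (sub_nonneg.2 h) (sub_nonneg.2 hab)]) (sub_nonneg.2 hab)

lemma dirichletGreen_le_div_mul' (hab : a ≤ b) :
    dirichletGreen a b t s ≤ (b - t) / (b - a) * (s - a) := by
  rw [dirichletGreen_comm]
  exact (dirichletGreen_le_div_mul hab).trans_eq (by ring)

lemma min_div_mul_min_le_dirichletGreen (ht : t ∈ Icc a b) (hs : s ∈ Icc a b) :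
    min (t - a) (b - t) / (b - a) * min (s - a) (b - s) ≤ dirichletGreen a b t s := by
  have hab : a ≤ b := ht.1.trans ht.2
  have hδt : 0 ≤ min (t - a) (b - t) := le_min (by linarith [ht.1]) (by linarith [ht.2])
  have hδs : 0 ≤ min (s - a) (b - s) := le_min (by linarith [hs.1]) (by linarith [hs.2])
  rcases le_total t s with h | h
  · rw [dirichletGreen_of_le h]
    exact mul_le_mul (div_le_div_of_nonneg_right (min_le_left _ _) (by linarith))
      (min_le_right _ _) hδs (div_nonneg (by linarith [ht.1]) (by linarith))
  · rw [dirichletGreen_comm, dirichletGreen_of_le h]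
    calc min (t - a) (b - t) / (b - a) * min (s - a) (b - s)
        = min (s - a) (b - s) / (b - a) * min (t - a) (b - t) := by ring
      _ ≤ (s - a) / (b - a) * (b - t) :=
        mul_le_mul (div_le_div_of_nonneg_right (min_le_left _ _) (by linarith))
          (min_le_right _ _) hδt (div_nonneg (by linarith [hs.1]) (by linarith))

end Kernel

section Integral

variable {a b t : ℝ} {f : ℝ → ℝ}

lemma MeasureTheory.IntegrableOn.continuous_mul_Ioo {w : ℝ → ℝ} (hw : Continuous w)
    (hf : IntegrableOn f (Ioo a b)) : IntegrableOn (fun s => w s * f s) (Ioo a b) :=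
  hf.continuousOn_mul_of_subset hw.continuousOn isCompact_Icc measurableSet_Ioo
    Ioo_subset_Icc_self

lemma setIntegral_Ioo_mul_mono {g h : ℝ → ℝ} (hg : Continuous g) (hh : Continuous h)
    (hf : IntegrableOn f (Ioo a b)) (hf0 : ∀ s ∈ Ioo a b, 0 ≤ f s)
    (hgh : ∀ s ∈ Ioo a b, g s ≤ h s) :
    ∫ s in Ioo a b, g s * f s ≤ ∫ s in Ioo a b, h s * f s :=
  setIntegral_mono_on (hf.continuous_mul_Ioo hg) (hf.continuous_mul_Ioo hh) measurableSet_Ioo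
    fun s hs => mul_le_mul_of_nonneg_right (hgh s hs) (hf0 s hs)

lemma setIntegral_Ioo_const_mul_mul (k : ℝ) (w : ℝ → ℝ) :
    ∫ s in Ioo a b, k * w s * f s = k * ∫ s in Ioo a b, w s * f s := by
  simp_rw [mul_assoc]
  exact integral_const_mul k _

lemma min_div_mul_integral_le_integral_dirichletGreen_mul (hf : IntegrableOn f (Ioo a b))
    (hf0 : ∀ s ∈ Ioo a b, 0 ≤ f s) (ht : t ∈ Icc a b) :
    min (t - a) (b - t) / (b - a) * ∫ s in Ioo a b, min (s - a) (b - s) * f s ≤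
      ∫ s in Ioo a b, dirichletGreen a b t s * f s := by
  rw [← setIntegral_Ioo_const_mul_mul]
  exact setIntegral_Ioo_mul_mono (by fun_prop) continuous_dirichletGreen hf hf0
    fun s hs => min_div_mul_min_le_dirichletGreen ht (Ioo_subset_Icc_self hs)

lemma integral_dirichletGreen_mul_le (hf : IntegrableOn f (Ioo a b))
    (hf0 : ∀ s ∈ Ioo a b, 0 ≤ f s) (ht : t ∈ Icc a b) :
    ∫ s in Ioo a b, dirichletGreen a b t s * f s ≤
      min (t - a) (b - t) / (b - a) *
        max (∫ s in Ioo a b, (s - a) * f s) (∫ s in Ioo a b, (b - s) * f s) := by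
  have hab : a ≤ b := ht.1.trans ht.2
  rcases min_choice (t - a) (b - t) with h | h <;> rw [h]
  · calc ∫ s in Ioo a b, dirichletGreen a b t s * f s
        ≤ ∫ s in Ioo a b, (t - a) / (b - a) * (b - s) * f s :=
          setIntegral_Ioo_mul_mono continuous_dirichletGreen (by fun_prop) hf hf0
            fun _ _ => dirichletGreen_le_div_mul hab
      _ ≤ _ := by
          rw [setIntegral_Ioo_const_mul_mul]
          exact mul_le_mul_of_nonneg_left (le_max_right _ _)
            (div_nonneg (by linarith [ht.1]) (by linarith))
  · calc ∫ s in Ioo a b, dirichletGreen a b t s * f s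
        ≤ ∫ s in Ioo a b, (b - t) / (b - a) * (s - a) * f s :=
          setIntegral_Ioo_mul_mono continuous_dirichletGreen (by fun_prop) hf hf0
            fun _ _ => dirichletGreen_le_div_mul' hab
      _ ≤ _ := by
          rw [setIntegral_Ioo_const_mul_mul]
          exact mul_le_mul_of_nonneg_left (le_max_left _ _)
            (div_nonneg (by linarith [ht.2]) (by linarith))

lemma sub_div_mul_min_le_integral_dirichletGreen_mul {m : ℝ → ℝ} (hm : IntegrableOn m (Ioo a b))
    (ht : t ∈ Icc a b) :
    ((∫ s in Ioo a b, min (s - a) (b - s) * max (m s) 0) -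
        max (∫ s in Ioo a b, (s - a) * max (-m s) 0) (∫ s in Ioo a b, (b - s) * max (-m s) 0)) /
        (b - a) * min (t - a) (b - t) ≤
      ∫ s in Ioo a b, dirichletGreen a b t s * m s := by
  have hpos : IntegrableOn (fun s => max (m s) 0) (Ioo a b) := hm.pos_part
  have hneg : IntegrableOn (fun s => max (-m s) 0) (Ioo a b) := hm.neg.pos_part
  have hsplit : ∫ s in Ioo a b, dirichletGreen a b t s * m s =
      (∫ s in Ioo a b, dirichletGreen a b t s * max (m s) 0) -
        ∫ s in Ioo a b, dirichletGreen a b t s * max (-m s) 0 := by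
    rw [← integral_sub (hpos.continuous_mul_Ioo continuous_dirichletGreen)
      (hneg.continuous_mul_Ioo continuous_dirichletGreen)]
    congr with s
    linear_combination (-dirichletGreen a b t s) * max_zero_sub_max_neg_zero_eq_self (m s)
  have hlower := min_div_mul_integral_le_integral_dirichletGreen_mul hpos
    (fun s _ => le_max_right (m s) 0) ht
  have hupper := integral_dirichletGreen_mul_le hneg (fun s _ => le_max_right (-m s) 0) ht
  rw [hsplit, div_mul_comm, mul_sub]
  exact sub_le_sub hlower hupper

end Integral

theorem stmt5 (a b : ℝ) (hab : a < b) (m : ℝ → ℝ)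
    (hm : MemLp m ⊤ (volume.restrict (Set.Ioo a b)))
    (u : ℝ → ℝ)
    (hu : ∀ t, u t = ∫ s in Set.Ioo a b, (min t s - a) * (b - max t s) / (b - a) * m s)
    (hcond :
      max (∫ t in Set.Ioo a b, (t - a) * max (-(m t)) 0)
          (∫ t in Set.Ioo a b, (b - t) * max (-(m t)) 0)
        < ∫ t in Set.Ioo a b, min (t - a) (b - t) * max (m t) 0) :
    (∀ t ∈ Set.Ioo a b, 0 < u t) ∧
    ∃ c > 0, ∀ t ∈ Set.Icc a b, c * min (t - a) (b - t) ≤ u t := by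
  have : IsFiniteMeasure (volume.restrict (Ioo a b)) :=
    isFiniteMeasure_restrict.2 measure_Ioo_lt_top.ne
  set c := ((∫ t in Set.Ioo a b, min (t - a) (b - t) * max (m t) 0) -
    max (∫ t in Set.Ioo a b, (t - a) * max (-(m t)) 0)
      (∫ t in Set.Ioo a b, (b - t) * max (-(m t)) 0)) / (b - a)
  have hc : 0 < c := div_pos (sub_pos.2 hcond) (sub_pos.2 hab)
  have hbound : ∀ t ∈ Icc a b, c * min (t - a) (b - t) ≤ u t := fun t ht => by
    rw [hu t]
    exact sub_div_mul_min_le_integral_dirichletGreen_mul (hm.integrable le_top) ht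
  refine ⟨fun t ht => ?_, c, hc, hbound⟩
  have hδ : 0 < min (t - a) (b - t) := lt_min (sub_pos.2 ht.1) (sub_pos.2 ht.2)
  exact (mul_pos hc hδ).trans_le (hbound t (Ioo_subset_Icc_self ht))
end
end

section
/- Let Ω be a nonempty set, 0 < p < 1, β > 0, k > 0, M > 0. Let m : Ω → ℝ with |m(x)| ≤ M for all x, and let w : Ω → ℝ be bounded with w > 0 on Ω and ε := inf_{x∈Ω} β/w(x)^p > 0. Let f : [0,∞) → [0,∞) be continuous with f(0) = 0 and lim_{s→∞} f(s)/s^p = 1. Then there exists λ₀ > 0 such that for all λ ≥ λ₀ and all x ∈ Ω: λ^{1/(1−p)}·( m(x)·w(x)^p − β ) ≤ λ·m(x)·( f(λ^{1/(1−p)}·w(x)) − k ). -/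
/-!
Put `L = λ^{1/(1-p)}`. Then `λ L^p = L`, so after dividing by `λ` the inequality reads
`m(x) ((L w)^p - f(L w) + k) ≤ L^p β`. Continuity of `f` on compacts together with
`f(s)/s^p → 1` gives `|f(s) - s^p| ≤ δ s^p + C` on `[0, ∞)` for every `δ > 0`. With
`δ = β / (2 M W^p)` the left side is at most `L^p β / 2 + M (C + |k|)`, and `L^p → ∞`.
-/

open MeasureTheory Real Filter

noncomputable section

open Set Topology

theorem exists_abs_sub_rpow_le_mul_rpow_add {f : ℝ → ℝ} {p δ : ℝ} (hp : 0 ≤ p) (hδ : 0 < δ)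
    (hfc : ContinuousOn f (Ici 0)) (hflim : Tendsto (fun s => f s / s ^ p) atTop (𝓝 1)) :
    ∃ C, ∀ s, 0 ≤ s → |f s - s ^ p| ≤ δ * s ^ p + C := by
  obtain ⟨S, hS⟩ := ((hflim.eventually (Metric.ball_mem_nhds 1 hδ)).and
    (eventually_gt_atTop 0)).exists_forall_of_atTop
  obtain ⟨C, hC⟩ := isCompact_Icc.exists_bound_of_continuousOn (f := fun s => f s - s ^ p)
    ((hfc.mono Icc_subset_Ici_self).sub (continuous_rpow_const hp).continuousOn)
  refine ⟨max C 0, fun s hs => ?_⟩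
  have hsp : 0 ≤ δ * s ^ p := by positivity
  rcases le_total s S with hsS | hSs
  · have := hC s ⟨hs, hsS⟩
    rw [Real.norm_eq_abs] at this
    linarith [le_max_left C 0]
  · obtain ⟨hclose, hpos⟩ := hS s hSs
    have hsp_pos : 0 < s ^ p := rpow_pos_of_pos hpos p
    rw [dist_eq] at hclose
    calc |f s - s ^ p| = |(f s / s ^ p - 1) * s ^ p| := by
          rw [sub_mul, div_mul_cancel₀ _ hsp_pos.ne', one_mul]
      _ = |f s / s ^ p - 1| * s ^ p := by rw [abs_mul, abs_of_pos hsp_pos]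
      _ ≤ δ * s ^ p := by gcongr
      _ ≤ δ * s ^ p + max C 0 := le_add_of_nonneg_right (le_max_right C 0)

theorem mul_rpow_one_div_one_sub_rpow {lam p : ℝ} (hlam : 0 < lam) (hp : p ≠ 1) :
    lam * (lam ^ (1 / (1 - p))) ^ p = lam ^ (1 / (1 - p)) := by
  have h1p : 1 - p ≠ 0 := sub_ne_zero.mpr hp.symm
  rw [← rpow_mul hlam.le]
  nth_rewrite 1 [← rpow_one lam]
  rw [← rpow_add hlam]
  congr 1
  field_simp
  ring

theorem rpow_mul_sub_le_mul_sub_of_abs_le {lam p a v y M β k : ℝ} (hlam : 0 < lam) (hp : p ≠ 1)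
    (hv : 0 ≤ v) (ha : |a| ≤ M)
    (h : M * (|y - (lam ^ (1 / (1 - p)) * v) ^ p| + |k|) ≤ (lam ^ (1 / (1 - p))) ^ p * β) :
    lam ^ (1 / (1 - p)) * (a * v ^ p - β) ≤ lam * a * (y - k) := by
  have hscale := mul_rpow_one_div_one_sub_rpow hlam hp
  set L := lam ^ (1 / (1 - p))
  have hL : 0 ≤ L := by positivity
  have hdefect : a * ((L * v) ^ p - y + k) ≤ L ^ p * β :=
    calc a * ((L * v) ^ p - y + k) ≤ |a| * |(L * v) ^ p - y + k| :=
          (le_abs_self _).trans (abs_mul _ _).le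
      _ ≤ M * (|y - (L * v) ^ p| + |k|) := by
          gcongr
          · exact (abs_nonneg a).trans ha
          · rw [abs_sub_comm y]
            exact abs_add_le _ _
      _ ≤ L ^ p * β := h
  calc L * (a * v ^ p - β) = lam * (a * (L * v) ^ p - L ^ p * β) := by
        rw [mul_rpow hL hv]; linear_combination (-(a * v ^ p - β)) * hscale
    _ ≤ lam * a * (y - k) := by linarith [mul_le_mul_of_nonneg_left hdefect hlam.le]

theorem stmt9_general {Ω : Type*} [Nonempty Ω]
    (p β k M : ℝ) (hp : 0 < p) (hp1 : p < 1) (hβ : 0 < β) (hM : 0 < M)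
    (m w : Ω → ℝ) (hm : ∀ x, |m x| ≤ M)
    (hwpos : ∀ x, 0 < w x) (W : ℝ) (hwW : ∀ x, w x ≤ W)
    (f : ℝ → ℝ) (hfc : ContinuousOn f (Set.Ici 0))
    (hflim : Tendsto (fun s => f s / s ^ p) atTop (nhds 1)) :
    ∃ lam₀ > 0, ∀ lam, lam₀ ≤ lam → ∀ x,
      lam ^ (1 / (1 - p)) * (m x * w x ^ p - β)
        ≤ lam * m x * (f (lam ^ (1 / (1 - p)) * w x) - k) := by
  obtain ⟨x₀⟩ := ‹Nonempty Ω›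
  have hW : 0 < W := (hwpos x₀).trans_le (hwW x₀)
  obtain ⟨C, hC⟩ := exists_abs_sub_rpow_le_mul_rpow_add (δ := β / (2 * M * W ^ p)) hp.le
    (by positivity) hfc hflim
  have hLp : Tendsto (fun lam : ℝ => (lam ^ (1 / (1 - p))) ^ p) atTop atTop :=
    (tendsto_rpow_atTop hp).comp (tendsto_rpow_atTop (one_div_pos.mpr (sub_pos.mpr hp1)))
  obtain ⟨a, ha⟩ := ((hLp.eventually_ge_atTop (2 * M * (C + |k|) / β)).and
    (eventually_gt_atTop 0)).exists_forall_of_atTop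
  refine ⟨max a 1, by positivity, fun lam hlam x => ?_⟩
  obtain ⟨hlarge, hlam⟩ := ha lam (le_of_max_le_left hlam)
  rw [div_le_iff₀ hβ] at hlarge
  apply rpow_mul_sub_le_mul_sub_of_abs_le hlam hp1.ne (hwpos x).le (hm x)
  set L := lam ^ (1 / (1 - p))
  have hL : 0 ≤ L := by positivity
  have hLw : (L * w x) ^ p ≤ L ^ p * W ^ p := by
    rw [mul_rpow hL (hwpos x).le]
    gcongr
    exacts [(hwpos x).le, hwW x]
  calc M * (|f (L * w x) - (L * w x) ^ p| + |k|)
      ≤ M * (β / (2 * M * W ^ p) * (L ^ p * W ^ p) + C + |k|) := by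
        gcongr
        exact (hC _ (mul_nonneg hL (hwpos x).le)).trans (by gcongr)
    _ = L ^ p * β / 2 + M * (C + |k|) := by field_simp; ring
    _ ≤ L ^ p * β := by linarith

theorem stmt9 {Ω : Type*} [Nonempty Ω]
    (p β k M : ℝ) (hp : 0 < p) (hp1 : p < 1) (hβ : 0 < β) (hk : 0 < k) (hM : 0 < M)
    (m w : Ω → ℝ) (hm : ∀ x, |m x| ≤ M)
    (hwpos : ∀ x, 0 < w x) (W : ℝ) (hwW : ∀ x, w x ≤ W)
    (hε : 0 < ⨅ x, β / w x ^ p)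
    (f : ℝ → ℝ) (hfc : ContinuousOn f (Set.Ici 0))
    (hfnn : ∀ s, 0 ≤ s → 0 ≤ f s) (hf0 : f 0 = 0)
    (hflim : Tendsto (fun s => f s / s ^ p) atTop (nhds 1)) :
    ∃ lam₀ > 0, ∀ lam, lam₀ ≤ lam → ∀ x,
      lam ^ (1 / (1 - p)) * (m x * w x ^ p - β)
        ≤ lam * m x * (f (lam ^ (1 / (1 - p)) * w x) - k) :=
  stmt9_general p β k M hp hp1 hβ hM m w hm hwpos W hwW f hfc hflim
end
end

section
/- Let Ω ⊂ ℝ^N be a bounded open set, δ > 0, and set Ω_δ := { x ∈ Ω : dist(x, ∂Ω) ≥ δ }. Let k > 0 and let f : [0,∞) → [0,∞) be continuous and bounded with lim_{s→∞} f(s) = c, where c > k, and set C := sup_{s>0} f(s). Let m : Ω → ℝ be bounded and let w : Ω → [0,∞) satisfy w(x) ≥ η for all x ∈ Ω_δ, for some η > 0. Define M_δ(x) := (c−k)·m(x) − δ·|m(x)| for x ∈ Ω_δ and M_δ(x) := −k·m⁺(x) − (C−k)·m⁻(x) for x ∈ Ω∖Ω_δ. Then there exists λ₀ > 0 such that for all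 λ ≥ λ₀ and all x ∈ Ω: λ·m(x)·( f(λ·w(x)) − k ) ≥ λ·M_δ(x). -/
open MeasureTheory Real Filter

noncomputable section

theorem stmt11 {N : ℕ} (Ω : Set (EuclideanSpace ℝ (Fin N)))
    (hΩo : IsOpen Ω) (hΩb : Bornology.IsBounded Ω)
    (δ k c C η M : ℝ) (hδ : 0 < δ) (hk : 0 < k) (hck : k < c) (hη : 0 < η) (hM : 0 < M)
    (f : ℝ → ℝ) (hfc : ContinuousOn f (Set.Ici 0))
    (hfnn : ∀ s, 0 ≤ s → 0 ≤ f s)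
    (hflim : Tendsto f atTop (nhds c))
    (hC : IsLUB (f '' Set.Ioi 0) C)
    (m w : EuclideanSpace ℝ (Fin N) → ℝ)
    (hm : ∀ x ∈ Ω, |m x| ≤ M)
    (hw0 : ∀ x ∈ Ω, 0 ≤ w x)
    (hwη : ∀ x ∈ Ω, δ ≤ Metric.infDist x (frontier Ω) → η ≤ w x) :
    ∃ lam₀ > 0, ∀ lam, lam₀ ≤ lam → ∀ x ∈ Ω,
      lam * (if δ ≤ Metric.infDist x (frontier Ω)
              then (c - k) * m x - δ * |m x|
              else -k * max (m x) 0 - (C - k) * max (-(m x)) 0)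
        ≤ lam * m x * (f (lam * w x) - k) := by
  -- f s ≤ C for all s ≥ 0
  have hfC : ∀ s, 0 ≤ s → f s ≤ C := by
    intro s hs
    rcases eq_or_lt_of_le hs with h | h
    · -- s = 0 : use continuity from the right
      have hcont : Filter.Tendsto f (nhdsWithin 0 (Set.Ioi 0)) (nhds (f 0)) :=
        (hfc 0 Set.self_mem_Ici).mono_left (nhdsWithin_mono 0 Set.Ioi_subset_Ici_self)
      have h0 : f 0 ≤ C := by
        refine le_of_tendsto hcont ?_
        filter_upwards [self_mem_nhdsWithin] with t ht
        exact hC.1 ⟨t, ht, rfl⟩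
      rw [← h]; exact h0
    · exact hC.1 ⟨s, h, rfl⟩
  -- eventually |f s - c| < δ
  obtain ⟨S, hS⟩ := (Metric.tendsto_atTop.mp hflim) δ hδ
  refine ⟨max 1 (S / η), lt_of_lt_of_le one_pos (le_max_left _ _), ?_⟩
  intro lam hlam x hx
  have hlam1 : (1 : ℝ) ≤ lam := le_trans (le_max_left _ _) hlam
  have hlam0 : 0 < lam := lt_of_lt_of_le one_pos hlam1
  have hs0 : 0 ≤ lam * w x := mul_nonneg hlam0.le (hw0 x hx)
  have hfs0 : 0 ≤ f (lam * w x) := hfnn _ hs0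
  have hfsC : f (lam * w x) ≤ C := hfC _ hs0
  by_cases hδx : δ ≤ Metric.infDist x (frontier Ω)
  · rw [if_pos hδx]
    have hwx : η ≤ w x := hwη x hx hδx
    have hSlam : S ≤ lam * w x := by
      have h1 : S / η ≤ lam := le_trans (le_max_right _ _) hlam
      have h2 : S ≤ lam * η := (div_le_iff₀ hη).mp h1
      calc S ≤ lam * η := h2
        _ ≤ lam * w x := by nlinarith
    have hdist : |f (lam * w x) - c| < δ := by
      have := hS (lam * w x) hSlam
      rwa [Real.dist_eq] at this
    have key : (c - k) * m x - δ * |m x| ≤ m x * (f (lam * w x) - k) := by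
      have h1 : m x * (f (lam * w x) - c) ≥ -(|m x| * δ) := by
        have := abs_mul (m x) (f (lam * w x) - c)
        have h2 : |m x * (f (lam * w x) - c)| ≤ |m x| * δ := by
          rw [abs_mul]
          exact mul_le_mul_of_nonneg_left hdist.le (abs_nonneg _)
        nlinarith [neg_abs_le (m x * (f (lam * w x) - c))]
      nlinarith
    calc lam * ((c - k) * m x - δ * |m x|)
        ≤ lam * (m x * (f (lam * w x) - k)) :=
          mul_le_mul_of_nonneg_left key hlam0.le
      _ = lam * m x * (f (lam * w x) - k) := by ring
  · rw [if_neg hδx]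
    have key : -k * max (m x) 0 - (C - k) * max (-(m x)) 0
        ≤ m x * (f (lam * w x) - k) := by
      rcases le_or_gt 0 (m x) with hmx | hmx
      · rw [max_eq_left hmx, max_eq_right (by linarith)]
        nlinarith
      · rw [max_eq_right hmx.le, max_eq_left (by linarith)]
        nlinarith
    calc lam * (-k * max (m x) 0 - (C - k) * max (-(m x)) 0)
        ≤ lam * (m x * (f (lam * w x) - k)) :=
          mul_le_mul_of_nonneg_left key hlam0.le
      _ = lam * m x * (f (lam * w x) - k) := by ring
end
end

section
/- Let Ω be a nonempty set, p > 0, σ := 1/(1+p), k > 0, δ > 0, M > 0, W > 0. Let m : Ω → ℝ with |m(x)| ≤ M for all x, let w : Ω → ℝ with 0 < w(x) ≤ W for all x, and let f : (0,∞) → (0,∞) be continuous with lim_{s→0⁺} f(s)·s^p = 1. Then there exists λ₀ > 0 such that for all λ ∈ (0, λ₀] and all x ∈ Ω: δ ≥ m(x)·( 1 − f(λ^σ·w(x))·(λ^σ·w(x))^p ) + k·m(x)·(λ^σ·w(x))^p; equivalently, λ^σ·(m(x) − δ)·w(x)^{−p} ≤ λ·m(x)·( f(λ^σ·w(x)) −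 k ). -/
open MeasureTheory Real Filter

noncomputable section

theorem stmt14 {Ω : Type*} [Nonempty Ω]
    (p σ k δ M W : ℝ) (hp : 0 < p) (hσ : σ = 1 / (1 + p))
    (hk : 0 < k) (hδ : 0 < δ) (hM : 0 < M) (hW : 0 < W)
    (m w : Ω → ℝ) (hm : ∀ x, |m x| ≤ M)
    (hw : ∀ x, 0 < w x ∧ w x ≤ W)
    (f : ℝ → ℝ) (hfc : ContinuousOn f (Set.Ioi 0))
    (hfpos : ∀ s, 0 < s → 0 < f s)
    (hflim : Tendsto (fun s => f s * s ^ p) (nhdsWithin 0 (Set.Ioi 0)) (nhds 1)) :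
    ∃ lam₀ > 0, ∀ lam ∈ Set.Ioc 0 lam₀, ∀ x,
      (m x * (1 - f (lam ^ σ * w x) * (lam ^ σ * w x) ^ p)
          + k * m x * (lam ^ σ * w x) ^ p ≤ δ) ∧
      lam ^ σ * (m x - δ) * w x ^ (-p)
        ≤ lam * m x * (f (lam ^ σ * w x) - k) := by
  have h1p : (0:ℝ) < 1 + p := by linarith
  have hσ0 : 0 < σ := by rw [hσ]; positivity
  have hσ1 : σ * (1 + p) = 1 := by rw [hσ]; field_simp
  obtain ⟨ε, hε, hεf⟩ := Metric.tendsto_nhdsWithin_nhds.mp hflim (δ / (2 * M))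
    (by positivity)
  set s₀ := min (ε / 2) ((δ / (2 * M * k)) ^ (1 / p)) with hs₀def
  have hs₀ : 0 < s₀ := lt_min (by linarith) (Real.rpow_pos_of_pos (by positivity) _)
  refine ⟨(s₀ / W) ^ (1 + p), Real.rpow_pos_of_pos (by positivity) _, ?_⟩
  rintro lam ⟨hl0, hl1⟩ x
  obtain ⟨hwx, hwxW⟩ := hw x
  have hlam : lam ^ σ ≤ s₀ / W := by
    calc lam ^ σ ≤ ((s₀ / W) ^ (1 + p)) ^ σ :=
          Real.rpow_le_rpow hl0.le hl1 hσ0.le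
      _ = (s₀ / W) ^ ((1 + p) * σ) := by
          rw [← Real.rpow_mul (by positivity)]
      _ = s₀ / W := by rw [mul_comm, hσ1, Real.rpow_one]
  have hlp : 0 < lam ^ σ := Real.rpow_pos_of_pos hl0 σ
  set s := lam ^ σ * w x with hsdef
  have hspos : 0 < s := mul_pos hlp hwx
  have hsle : s ≤ s₀ := by
    calc s ≤ (s₀ / W) * W := mul_le_mul hlam hwxW hwx.le (by positivity)
      _ = s₀ := div_mul_cancel₀ _ hW.ne'
  have hsmall : |f s * s ^ p - 1| < δ / (2 * M) := by
    have := hεf (show s ∈ Set.Ioi (0:ℝ) from hspos)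
      (by rw [Real.dist_eq, sub_zero, abs_of_pos hspos]
          calc s ≤ s₀ := hsle
            _ ≤ ε / 2 := min_le_left _ _
            _ < ε := by linarith)
    rwa [Real.dist_eq] at this
  have hsp0 : (0:ℝ) ≤ s ^ p := (Real.rpow_pos_of_pos hspos p).le
  have hsp : s ^ p ≤ δ / (2 * M * k) := by
    calc s ^ p ≤ ((δ / (2 * M * k)) ^ (1 / p)) ^ p :=
          Real.rpow_le_rpow hspos.le (hsle.trans (min_le_right _ _)) hp.le
      _ = δ / (2 * M * k) := by
          rw [← Real.rpow_mul (by positivity), one_div,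
            inv_mul_cancel₀ hp.ne', Real.rpow_one]
  have h1 : m x * (1 - f s * s ^ p) ≤ δ / 2 := by
    calc m x * (1 - f s * s ^ p) ≤ |m x * (1 - f s * s ^ p)| := le_abs_self _
      _ = |m x| * |1 - f s * s ^ p| := abs_mul _ _
      _ ≤ M * (δ / (2 * M)) := by
          refine mul_le_mul (hm x) ?_ (abs_nonneg _) hM.le
          rw [abs_sub_comm]; exact hsmall.le
      _ = δ / 2 := by field_simp
  have hmx : m x ≤ M := le_of_abs_le (hm x)
  have h2 : k * m x * s ^ p ≤ δ / 2 := by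
    calc k * m x * s ^ p ≤ k * M * s ^ p :=
          mul_le_mul_of_nonneg_right (mul_le_mul_of_nonneg_left hmx hk.le) hsp0
      _ ≤ k * M * (δ / (2 * M * k)) :=
          mul_le_mul_of_nonneg_left hsp (by positivity)
      _ = δ / 2 := by field_simp
  have hA : m x * (1 - f s * s ^ p) + k * m x * s ^ p ≤ δ := by linarith
  refine ⟨hA, ?_⟩
  have h3 : m x - δ ≤ m x * s ^ p * (f s - k) := by nlinarith [hA]
  have hc : (0:ℝ) ≤ lam ^ σ * w x ^ (-p) :=
    (mul_pos hlp (Real.rpow_pos_of_pos hwx _)).le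
  have key : lam ^ σ * s ^ p * w x ^ (-p) = lam := by
    have e1 : w x ^ p * w x ^ (-p) = 1 := by
      rw [← Real.rpow_add hwx]; simp
    have e2 : lam ^ σ * lam ^ (σ * p) = lam := by
      rw [← Real.rpow_add hl0, show σ + σ * p = 1 by linear_combination hσ1,
        Real.rpow_one]
    calc lam ^ σ * s ^ p * w x ^ (-p)
        = lam ^ σ * ((lam ^ σ) ^ p * w x ^ p) * w x ^ (-p) := by
          rw [hsdef, Real.mul_rpow hlp.le hwx.le]
      _ = lam ^ σ * lam ^ (σ * p) * (w x ^ p * w x ^ (-p)) := by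
          rw [← Real.rpow_mul hl0.le]; ring
      _ = lam := by rw [e1, e2, mul_one]
  calc lam ^ σ * (m x - δ) * w x ^ (-p)
      = (lam ^ σ * w x ^ (-p)) * (m x - δ) := by ring
    _ ≤ (lam ^ σ * w x ^ (-p)) * (m x * s ^ p * (f s - k)) :=
        mul_le_mul_of_nonneg_left h3 hc
    _ = (lam ^ σ * s ^ p * w x ^ (-p)) * (m x * (f s - k)) := by ring
    _ = lam * (m x * (f s - k)) := by rw [key]
    _ = lam * m x * (f s - k) := by ring
end
end
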